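/- Let d ≥ 1, ε ∈ ℝ, U : ℝ^d → ℝ, and let ρ, Ŝ : ℝ × ℝ^d → ℝ with ρ(t,x) > 0 everywhere, both ρ and Ŝ continuously differentiable in t and twice continuously differentiable in x. Suppose that at every (t,x): (i) ∂_t ρ = −∇·(ρ ∇Ŝ) (continuity equation), and (ii) ∂_t Ŝ = −½‖∇Ŝ‖² − ½ε²‖∇(log ∘ ρ)‖² − ε² Δ(log ∘ ρ) + U. Then S := Ŝ + ε·log ρ satisfies, at every (t,x), both ∂_t ρ = −∇·(ρ ∇S) + ε Δρ and ∂_t S = −½‖∇S‖² − ε ΔS + U. -/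

import Mathlib

open MeasureTheory
open scoped RealInnerProductSpace BigOperators

/-- Gradient of a scalar function on Euclidean space. -/
noncomputable def egrad {d : ℕ} (f : EuclideanSpace ℝ (Fin d) → ℝ)
    (x : EuclideanSpace ℝ (Fin d)) : EuclideanSpace ℝ (Fin d) :=
  gradient f x

/-- Laplacian `Δf = ∑ i, ∂²f/∂x_i²`. -/
noncomputable def elap {d : ℕ} (f : EuclideanSpace ℝ (Fin d) → ℝ)
    (x : EuclideanSpace ℝ (Fin d)) : ℝ :=
  ∑ i, fderiv ℝ (fun y => fderiv ℝ f y (EuclideanSpace.single i (1 : ℝ))) x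
      (EuclideanSpace.single i (1 : ℝ))

/-- Divergence `∇·V = ∑ i, ∂V_i/∂x_i` of a vector field. -/
noncomputable def ediv {d : ℕ} (V : EuclideanSpace ℝ (Fin d) → EuclideanSpace ℝ (Fin d))
    (x : EuclideanSpace ℝ (Fin d)) : ℝ :=
  ∑ i, fderiv ℝ (fun y => V y i) x (EuclideanSpace.single i (1 : ℝ))

/-!
Writing `S = Ŝ + ε L` with `L = log ρ`, the drift of the Fokker–Planck equation splits as
`ρ ∇S = ρ ∇Ŝ + ε ∇ρ`, so its divergence is that of the continuity equation plus `ε Δρ`.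
For the Hamilton–Jacobi–Bellman equation, the continuity equation divided by `ρ` reads
`∂ₜ L = -(⟪∇L, ∇Ŝ⟫ + ΔŜ)`; substituting this, `∇S = ∇Ŝ + ε ∇L` and `ΔS = ΔŜ + ε ΔL`
into `∂ₜ S = ∂ₜ Ŝ + ε ∂ₜ L`, the cross term `ε ⟪∇Ŝ, ∇L⟫` is exactly what completes
`‖∇Ŝ‖² + ε² ‖∇L‖²` to `‖∇S‖²`.
-/

open InnerProductSpace

theorem differentiableAt_fderiv_apply {E F : Type*} [NormedAddCommGroup E] [NormedSpace ℝ E]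
    [NormedAddCommGroup F] [NormedSpace ℝ F] {f : E → F} {x : E} (hf : ContDiffAt ℝ 2 f x)
    (v : E) : DifferentiableAt ℝ (fun y => fderiv ℝ f y v) x :=
  ((hf.fderiv_right (m := 1) le_rfl).clm_apply contDiffAt_const).differentiableAt one_ne_zero

section EuclideanCalculus

variable {d : ℕ}

theorem egrad_apply (f : EuclideanSpace ℝ (Fin d) → ℝ) (x : EuclideanSpace ℝ (Fin d))
    (i : Fin d) : egrad f x i = fderiv ℝ f x (EuclideanSpace.single i 1) := by
  have h : ⟪egrad f x, EuclideanSpace.single i (1 : ℝ)⟫_ℝ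
      = fderiv ℝ f x (EuclideanSpace.single i 1) := by
    simp [egrad, gradient, toDual_symm_apply]
  simpa [EuclideanSpace.inner_single_right] using h

theorem differentiableAt_egrad_apply {f : EuclideanSpace ℝ (Fin d) → ℝ}
    {x : EuclideanSpace ℝ (Fin d)} (hf : ContDiffAt ℝ 2 f x) (i : Fin d) :
    DifferentiableAt ℝ (fun y => egrad f y i) x := by
  simp only [egrad_apply]
  exact differentiableAt_fderiv_apply hf _

theorem egrad_add_const_mul {f g : EuclideanSpace ℝ (Fin d) → ℝ}
    {x : EuclideanSpace ℝ (Fin d)} (hf : DifferentiableAt ℝ f x) (hg : DifferentiableAt ℝ g x)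
    (c : ℝ) : egrad (fun z => f z + c * g z) x = egrad f x + c • egrad g x := by
  simp [egrad, gradient, fderiv_fun_add hf (hg.const_mul c), fderiv_const_mul hg]

theorem egrad_log {g : EuclideanSpace ℝ (Fin d) → ℝ} {x : EuclideanSpace ℝ (Fin d)}
    (hg : DifferentiableAt ℝ g x) (h0 : g x ≠ 0) :
    egrad (fun z => Real.log (g z)) x = (g x)⁻¹ • egrad g x := by
  simp [egrad, gradient, (hg.hasFDerivAt.log h0).fderiv]

theorem ediv_egrad (f : EuclideanSpace ℝ (Fin d) → ℝ) : ediv (egrad f) = elap f := by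
  funext x
  simp only [ediv, elap, egrad_apply]

theorem ediv_add_smul {V W : EuclideanSpace ℝ (Fin d) → EuclideanSpace ℝ (Fin d)}
    {x : EuclideanSpace ℝ (Fin d)} (hV : ∀ i, DifferentiableAt ℝ (fun y => V y i) x)
    (hW : ∀ i, DifferentiableAt ℝ (fun y => W y i) x) (c : ℝ) :
    ediv (fun y => V y + c • W y) x = ediv V x + c * ediv W x := by
  simp only [ediv, PiLp.add_apply, PiLp.smul_apply, smul_eq_mul, Finset.mul_sum,
    ← Finset.sum_add_distrib]
  refine Finset.sum_congr rfl fun i _ => ?_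
  rw [fderiv_fun_add (hV i) ((hW i).const_mul c), fderiv_const_mul (hW i)]
  rfl

theorem elap_add_const_mul {f g : EuclideanSpace ℝ (Fin d) → ℝ} (hf : ContDiff ℝ 2 f)
    (hg : ContDiff ℝ 2 g) (c : ℝ) (x : EuclideanSpace ℝ (Fin d)) :
    elap (fun z => f z + c * g z) x = elap f x + c * elap g x := by
  have hgrad : egrad (fun z => f z + c * g z) = fun y => egrad f y + c • egrad g y :=
    funext fun y => egrad_add_const_mul (hf.differentiable two_ne_zero y)
      (hg.differentiable two_ne_zero y) c
  rw [← ediv_egrad, hgrad, ediv_add_smul (differentiableAt_egrad_apply hf.contDiffAt)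
    (differentiableAt_egrad_apply hg.contDiffAt), ediv_egrad, ediv_egrad]

theorem differentiableAt_smul_egrad_apply {f g : EuclideanSpace ℝ (Fin d) → ℝ}
    {x : EuclideanSpace ℝ (Fin d)} (hf : ContDiffAt ℝ 2 f x) (hg : DifferentiableAt ℝ g x)
    (i : Fin d) : DifferentiableAt ℝ (fun y => (g y • egrad f y) i) x := by
  simp only [PiLp.smul_apply, smul_eq_mul]
  exact hg.mul (differentiableAt_egrad_apply hf i)

theorem ediv_smul_egrad {f g : EuclideanSpace ℝ (Fin d) → ℝ} {x : EuclideanSpace ℝ (Fin d)}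
    (hf : ContDiffAt ℝ 2 f x) (hg : DifferentiableAt ℝ g x) :
    ediv (fun y => g y • egrad f y) x = ⟪egrad g x, egrad f x⟫_ℝ + g x * elap f x := by
  simp only [ediv, elap, PiLp.inner_apply, PiLp.smul_apply, smul_eq_mul, egrad_apply,
    RCLike.inner_apply, conj_trivial, Finset.mul_sum, ← Finset.sum_add_distrib]
  refine Finset.sum_congr rfl fun i _ => ?_
  rw [fderiv_fun_mul hg (differentiableAt_fderiv_apply hf _)]
  simp only [add_apply, smul_apply, smul_eq_mul]
  ring

theorem smul_egrad_add_const_mul_log {f g : EuclideanSpace ℝ (Fin d) → ℝ}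
    {y : EuclideanSpace ℝ (Fin d)} (hf : DifferentiableAt ℝ f y) (hg : DifferentiableAt ℝ g y)
    (h0 : g y ≠ 0) (c : ℝ) :
    g y • egrad (fun z => f z + c * Real.log (g z)) y = g y • egrad f y + c • egrad g y := by
  rw [egrad_add_const_mul hf (hg.log h0), egrad_log hg h0, smul_add, smul_smul, smul_smul,
    mul_right_comm, mul_inv_cancel₀ h0, one_mul]

theorem ediv_smul_egrad_add_const_mul_log {f g : EuclideanSpace ℝ (Fin d) → ℝ}
    (hf : ContDiff ℝ 2 f) (hg : ContDiff ℝ 2 g) (h0 : ∀ y, g y ≠ 0) (c : ℝ)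
    (x : EuclideanSpace ℝ (Fin d)) :
    ediv (fun y => g y • egrad (fun z => f z + c * Real.log (g z)) y) x
      = ediv (fun y => g y • egrad f y) x + c * elap g x := by
  have hg' := hg.differentiable two_ne_zero
  have hfield : (fun y => g y • egrad (fun z => f z + c * Real.log (g z)) y)
      = fun y => g y • egrad f y + c • egrad g y :=
    funext fun y => smul_egrad_add_const_mul_log (hf.differentiable two_ne_zero y) (hg' y) (h0 y) c
  rw [hfield, ediv_add_smul (differentiableAt_smul_egrad_apply hf.contDiffAt (hg' x))
    (differentiableAt_egrad_apply hg.contDiffAt), ediv_egrad]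

end EuclideanCalculus

theorem inverse_hopf_cole_general {d : ℕ} (ε : ℝ)
    (U : EuclideanSpace ℝ (Fin d) → ℝ)
    (ρ Shat : ℝ → EuclideanSpace ℝ (Fin d) → ℝ)
    (hpos : ∀ t x, 0 < ρ t x)
    (hρt : ∀ x, ContDiff ℝ 1 (fun t => ρ t x))
    (hρx : ∀ t, ContDiff ℝ 2 (ρ t))
    (hSt : ∀ x, ContDiff ℝ 1 (fun t => Shat t x))
    (hSx : ∀ t, ContDiff ℝ 2 (Shat t))
    (hCont : ∀ t x, deriv (fun s => ρ s x) t
      = -ediv (fun y => ρ t y • egrad (Shat t) y) x)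
    (hEq : ∀ t x, deriv (fun s => Shat s x) t
      = -(1/2) * ‖egrad (Shat t) x‖ ^ 2
        - (1/2) * ε ^ 2 * ‖egrad (fun z => Real.log (ρ t z)) x‖ ^ 2
        - ε ^ 2 * elap (fun z => Real.log (ρ t z)) x + U x) :
    ∀ t x,
      (deriv (fun s => ρ s x) t
        = -ediv (fun y => ρ t y • egrad (fun z => Shat t z + ε * Real.log (ρ t z)) y) x
          + ε * elap (ρ t) x) ∧
      (deriv (fun s => Shat s x + ε * Real.log (ρ s x)) t
        = -(1/2) * ‖egrad (fun z => Shat t z + ε * Real.log (ρ t z)) x‖ ^ 2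
          - ε * elap (fun z => Shat t z + ε * Real.log (ρ t z)) x + U x) := by
  intro t x
  have hρ0 : ∀ y, ρ t y ≠ 0 := fun y => (hpos t y).ne'
  have hρ' := (hρx t).differentiable two_ne_zero
  have hS' := (hSx t).differentiable two_ne_zero
  refine ⟨by rw [hCont, ediv_smul_egrad_add_const_mul_log (hSx t) (hρx t) hρ0]; ring, ?_⟩
  have hρ_t : HasDerivAt (fun s => ρ s x) (deriv (fun s => ρ s x) t) t :=
    ((hρt x).differentiable one_ne_zero t).hasDerivAt
  have hS_t : HasDerivAt (fun s => Shat s x) (deriv (fun s => Shat s x) t) t :=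
    ((hSt x).differentiable one_ne_zero t).hasDerivAt
  have hlog_t : deriv (fun s => ρ s x) t / ρ t x
      = -(⟪egrad (fun z => Real.log (ρ t z)) x, egrad (Shat t) x⟫_ℝ + elap (Shat t) x) := by
    rw [hCont, ediv_smul_egrad (hSx t).contDiffAt (hρ' x), egrad_log (hρ' x) (hρ0 x),
      real_inner_smul_left]
    field_simp [hρ0 x]
  rw [(hS_t.fun_add ((hρ_t.log (hρ0 x)).const_mul ε)).deriv, hlog_t, hEq,
    egrad_add_const_mul (hS' x) ((hρ' x).log (hρ0 x)),
    elap_add_const_mul (hSx t) ((hρx t).log hρ0), norm_add_sq_real, norm_smul,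
    real_inner_smul_right, real_inner_comm]
  simp only [Real.norm_eq_abs, mul_pow, sq_abs]
  ring

/-- inverse Hopf–Cole transformation.  If `ρ` solves the continuity
equation with drift `∇Ŝ` and `Ŝ` solves the transformed equation, then
`S = Ŝ + ε log ρ` solves the Fokker–Planck and Hamilton–Jacobi–Bellman equations. -/
theorem inverse_hopf_cole {d : ℕ} (hd : 1 ≤ d) (ε : ℝ)
    (U : EuclideanSpace ℝ (Fin d) → ℝ)
    (ρ Shat : ℝ → EuclideanSpace ℝ (Fin d) → ℝ)
    (hpos : ∀ t x, 0 < ρ t x)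
    (hρt : ∀ x, ContDiff ℝ 1 (fun t => ρ t x))
    (hρx : ∀ t, ContDiff ℝ 2 (ρ t))
    (hSt : ∀ x, ContDiff ℝ 1 (fun t => Shat t x))
    (hSx : ∀ t, ContDiff ℝ 2 (Shat t))
    (hCont : ∀ t x, deriv (fun s => ρ s x) t
      = -ediv (fun y => ρ t y • egrad (Shat t) y) x)
    (hEq : ∀ t x, deriv (fun s => Shat s x) t
      = -(1/2) * ‖egrad (Shat t) x‖ ^ 2
        - (1/2) * ε ^ 2 * ‖egrad (fun z => Real.log (ρ t z)) x‖ ^ 2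
        - ε ^ 2 * elap (fun z => Real.log (ρ t z)) x + U x) :
    ∀ t x,
      (deriv (fun s => ρ s x) t
        = -ediv (fun y => ρ t y • egrad (fun z => Shat t z + ε * Real.log (ρ t z)) y) x
          + ε * elap (ρ t) x) ∧
      (deriv (fun s => Shat s x + ε * Real.log (ρ s x)) t
        = -(1/2) * ‖egrad (fun z => Shat t z + ε * Real.log (ρ t z)) x‖ ^ 2
          - ε * elap (fun z => Shat t z + ε * Real.log (ρ t z)) x + U x) :=
  inverse_hopf_cole_general ε U ρ Shat hpos hρt hρx hSt hSx hCont hEq
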